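/- Let m : [0,∞) → [0,∞) be continuous with primitive M(t) = ∫_0^t m(τ)dτ. If m(t)/t is nonincreasing on (0,∞), then the function t ↦ 2M(t) − m(t)·t is nondecreasing on [0,∞). -/
import Mathlib


theorem stmt5 (m M : ℝ → ℝ) (hc : ContinuousOn m (Set.Ici 0))
    (hnn : ∀ t, 0 ≤ t → 0 ≤ m t)
    (hM : ∀ t, M t = ∫ τ in (0 : ℝ)..t, m τ)
    (hmono : ∀ t₁ t₂ : ℝ, 0 < t₁ → t₁ ≤ t₂ → m t₂ / t₂ ≤ m t₁ / t₁) :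
    MonotoneOn (fun t => 2 * M t - m t * t) (Set.Ici 0) := by
  have hint : ∀ a b : ℝ, 0 ≤ a → a ≤ b → IntervalIntegrable m MeasureTheory.volume a b := by
    intro a b ha hab
    apply (hc.mono _).intervalIntegrable
    rw [Set.uIcc_of_le hab]
    intro x hx
    exact le_trans ha hx.1
  intro s hs t ht hst
  simp only [Set.mem_Ici] at hs ht
  rcases eq_or_lt_of_le hst with rfl | hlt
  · exact le_refl _
  have ht0 : 0 < t := lt_of_le_of_lt hs hlt
  simp only
  have hMst : M t - M s = ∫ τ in s..t, m τ := by
    rw [hM, hM, ← intervalIntegral.integral_add_adjacent_intervals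
      (hint 0 s le_rfl hs) (hint s t hs hst)]
    ring
  -- pointwise lower bound
  have hlow : (∫ τ in s..t, m t / t * τ) ≤ ∫ τ in s..t, m τ := by
    apply intervalIntegral.integral_mono_on hst _ (hint s t hs hst)
    · intro x hx
      rcases eq_or_lt_of_le (le_trans hs hx.1) with h0 | hx0
      · rw [← h0]; simpa using hnn 0 le_rfl
      · have h := hmono x t hx0 hx.2
        have := mul_le_mul_of_nonneg_right h (le_of_lt hx0)
        calc m t / t * x ≤ m x / x * x := this
          _ = m x := by field_simp
    · exact (continuous_const.mul continuous_id).intervalIntegrable s t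
  have hcomp : (∫ τ in s..t, m t / t * τ) = m t / t * ((t^2 - s^2) / 2) := by
    rw [intervalIntegral.integral_const_mul, integral_id]
  have key : m t / t * s^2 ≤ m s * s := by
    rcases eq_or_lt_of_le hs with h0 | hs0
    · rw [← h0]; simp
    · have h := hmono s t hs0 hst
      have h2 : m t / t * s^2 ≤ m s / s * s^2 := by nlinarith [sq_nonneg s]
      have h3 : m s / s * s^2 = m s * s := by field_simp
      linarith
  have hdiv : m t / t * t^2 = m t * t := by field_simp
  rw [hcomp] at hlow
  nlinarith [hlow, key, hMst]
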